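/- Assume Hypotheses 4.1. For pairwise distinct x,y,z ∈ Ω: if x ∈ \overline{y,z} then [y,z]·[x,y]·[y,z] = [x,y], and if x ∉ \overline{y,z} then [y,z]·[x,y]·[y,z] = [x,z]. -/

import Mathlib

open Equiv

variable {Ω : Type*}

/-- `(Ω, B)` is a `2-(n,4,lam)` design: `Ω` has `n` points, every line has 4 points,
and every 2-element subset of `Ω` is contained in exactly `lam` lines. -/
def IsDesign [Fintype Ω] (B : Set (Finset Ω)) (n lam : ℕ) : Prop :=
  Fintype.card Ω = n ∧
  (∀ L ∈ B, L.card = 4) ∧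
  (∀ p : Finset Ω, p.card = 2 → {L ∈ B | p ⊆ L}.ncard = lam)

/-- A design is supersimple if any two distinct lines intersect in at most two points. -/
def Supersimple [DecidableEq Ω] (B : Set (Finset Ω)) : Prop :=
  ∀ L₁ ∈ B, ∀ L₂ ∈ B, L₁ ≠ L₂ → (L₁ ∩ L₂).card ≤ 2

/-- Condition (△): the symmetric difference of two lines meeting in two points is a line. -/
def SymmDiffCond [DecidableEq Ω] (B : Set (Finset Ω)) : Prop :=
  ∀ L₁ ∈ B, ∀ L₂ ∈ B, (L₁ ∩ L₂).card = 2 → symmDiff L₁ L₂ ∈ B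

/-- The collinear triples: 3-element subsets contained in some line. -/
def collinearTriples (B : Set (Finset Ω)) : Set (Finset Ω) :=
  { t | t.card = 3 ∧ ∃ L ∈ B, t ⊆ L }

/-- `(Ω, C)` is a regular two-graph: `C` is a set of 3-element subsets, every 2-element
subset lies in exactly `μ` members of `C` for a constant `μ`, and every 4-element subset
contains exactly 0, 2 or 4 members of `C`. -/
def IsRegularTwoGraph (C : Set (Finset Ω)) : Prop :=
  (∀ t ∈ C, t.card = 3) ∧
  (∃ μ : ℕ, ∀ p : Finset Ω, p.card = 2 → {t ∈ C | p ⊆ t}.ncard = μ) ∧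
  (∀ q : Finset Ω, q.card = 4 →
    {t ∈ C | t ⊆ q}.ncard = 0 ∨ {t ∈ C | t ⊆ q}.ncard = 2 ∨ {t ∈ C | t ⊆ q}.ncard = 4)

/-- `mv a b` is the elementary move `[a,b]`: it is the identity when `a = b`; when `a ≠ b`
it interchanges `a` and `b`, interchanges `x` and `y` whenever `{a,b,x,y}` is a line, and
fixes every point not collinear with `a, b`. -/
def IsElemMoveFn [DecidableEq Ω] (B : Set (Finset Ω)) (mv : Ω → Ω → Equiv.Perm Ω) : Prop :=
  (∀ a, mv a a = 1) ∧
  ∀ a b : Ω, a ≠ b →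
    mv a b a = b ∧ mv a b b = a ∧
    (∀ x y : Ω, ({a, b, x, y} : Finset Ω) ∈ B → mv a b x = y) ∧
    (∀ x : Ω, x ≠ a → x ≠ b → (∀ L ∈ B, ¬(a ∈ L ∧ b ∈ L ∧ x ∈ L)) → mv a b x = x)

/-- The move sequence `[a, b₁, …, b_k] = [a,b₁][b₁,b₂]⋯[b_{k-1},b_k]`; the factors are
applied left-to-right (so in Lean's convention the product is reversed). -/
def moveSeq (mv : Ω → Ω → Equiv.Perm Ω) : Ω → List Ω → Equiv.Perm Ω
  | _, [] => 1
  | a, b :: l => moveSeq mv b l * mv a b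

/-- The Conway groupoid `L_x(D)`: all move sequences starting at `x`. -/
def ConwayGroupoid (mv : Ω → Ω → Equiv.Perm Ω) (x : Ω) : Set (Equiv.Perm Ω) :=
  { g | ∃ l : List Ω, g = moveSeq mv x l }

/-- The hole stabilizer `π_x(D)`: all move sequences starting and ending at `x`. -/
def holeStabilizer (mv : Ω → Ω → Equiv.Perm Ω) (x : Ω) : Set (Equiv.Perm Ω) :=
  { g | ∃ l : List Ω, g = moveSeq mv x (l ++ [x]) }

/-- `L(D)`: the set of all move sequences. -/
def allMoveSeqs (mv : Ω → Ω → Equiv.Perm Ω) : Set (Equiv.Perm Ω) :=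
  { g | ∃ (a : Ω) (l : List Ω), g = moveSeq mv a l }

/-- The set `E` of elementary moves `[a,b]` with `a ≠ b`. -/
def elemMoves (mv : Ω → Ω → Equiv.Perm Ω) : Set (Equiv.Perm Ω) :=
  { g | ∃ a b : Ω, a ≠ b ∧ g = mv a b }

/-- `\overline{x,y}`: the set of points lying on a common line with `x` and `y`. -/
def lineJoin (B : Set (Finset Ω)) (x y : Ω) : Set Ω :=
  { z | ∃ L ∈ B, x ∈ L ∧ y ∈ L ∧ z ∈ L }

/-- A set `G` of permutations is transitive on `S`. -/
def SetTransitiveOn (G : Set (Equiv.Perm Ω)) (S : Set Ω) : Prop :=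
  ∀ x ∈ S, ∀ y ∈ S, ∃ g ∈ G, g x = y

/-- `Δ` is a block for the set `G` of permutations. -/
def SetIsBlock (G : Set (Equiv.Perm Ω)) (Δ : Set Ω) : Prop :=
  ∀ g ∈ G, (⇑g) '' Δ = Δ ∨ Disjoint ((⇑g) '' Δ) Δ

/-- A set `G` of permutations is primitive on `S`: it is transitive on `S` and every
block contained in `S` is trivial (equivalently, the only invariant partitions are the
partition into singletons and the one-part partition). -/
def SetPrimitiveOn (G : Set (Equiv.Perm Ω)) (S : Set Ω) : Prop :=
  SetTransitiveOn G S ∧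
  ∀ Δ : Set Ω, Δ ⊆ S → SetIsBlock G Δ → Δ.Subsingleton ∨ Δ = S

/-- Primitivity on all of `Ω`. -/
def SetPrimitive (G : Set (Equiv.Perm Ω)) : Prop :=
  SetPrimitiveOn G Set.univ

/-- `(G, E)` is a 3-transposition group: `G` is the group generated by `E`, `E` is a
union of `G`-conjugacy classes of involutions, and any product of two members of `E`
has order 1, 2 or 3. -/
def Is3TranspositionGroup (G E : Set (Equiv.Perm Ω)) : Prop :=
  ((Subgroup.closure E : Subgroup (Equiv.Perm Ω)) : Set (Equiv.Perm Ω)) = G ∧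
  (∀ e ∈ E, orderOf e = 2) ∧
  (∀ g ∈ G, ∀ e ∈ E, g * e * g⁻¹ ∈ E) ∧
  (∀ g ∈ E, ∀ h ∈ E, orderOf (g * h) = 1 ∨ orderOf (g * h) = 2 ∨ orderOf (g * h) = 3)

/-- Two designs are isomorphic: a bijection of the point sets carrying lines to lines. -/
def DesignIso {Ω₁ Ω₂ : Type*} (B₁ : Set (Finset Ω₁)) (B₂ : Set (Finset Ω₂)) : Prop :=
  ∃ e : Ω₁ ≃ Ω₂, ∀ L : Finset Ω₁, L ∈ B₁ ↔ L.map e.toEmbedding ∈ B₂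

/-- The lines of the Boolean quadruple system of order `2^m`: 4-subsets of `F_2^m`
summing to zero. -/
def booleanLines (m : ℕ) : Set (Finset (Fin m → ZMod 2)) :=
  { L | L.card = 4 ∧ ∑ v ∈ L, v = 0 }

/-- `V = F_2^{2m}`, with coordinates indexed by `Fin m ⊕ Fin m`. -/
abbrev Vsp (m : ℕ) := (Fin m ⊕ Fin m) → ZMod 2

/-- `θ(u) = u e uᵀ` where `e` is the block matrix `(0 I; 0 0)`. -/
def theta {m : ℕ} (u : Vsp m) : ZMod 2 :=
  ∑ i : Fin m, u (Sum.inl i) * u (Sum.inr i)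

/-- The lines of the design `D^a`: 4-subsets of `V` summing to zero on which `θ` sums
to zero. -/
def linesA (m : ℕ) : Set (Finset (Vsp m)) :=
  { L | L.card = 4 ∧ ∑ v ∈ L, v = 0 ∧ ∑ v ∈ L, theta v = 0 }

/-- The lines of the design `D^ε`: 4-subsets of `{v ∈ V : θ(v) = ε}` summing to zero. -/
def linesEps (m : ℕ) (ε : ZMod 2) : Set (Finset {v : Vsp m // theta v = ε}) :=
  { L | L.card = 4 ∧ ∑ v ∈ L, (v : Vsp m) = 0 }

/-- The derived graph `G_{D,∞}`: vertices are the points other than `∞`, with `a, b`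
adjacent iff `{∞,a,b}` is a collinear triple. -/
def derivedGraph [DecidableEq Ω] (B : Set (Finset Ω)) (inf : Ω) :
    SimpleGraph {x : Ω // x ≠ inf} where
  Adj a b := a ≠ b ∧ ({inf, (a : Ω), (b : Ω)} : Finset Ω) ∈ collinearTriples B
  symm := by
    constructor
    rintro a b ⟨hab, h⟩
    exact ⟨hab.symm, by rwa [Finset.pair_comm (b : Ω) (a : Ω)]⟩
  loopless := by constructor; rintro a ⟨h, -⟩; exact h rfl

/-- `w` witnesses the triangle property for the edge `{u,v}`: `w` is a common neighbour
of `u` and `v`, and every other vertex is adjacent to exactly one or three of `u,v,w`. -/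
def TriangleWitness {V : Type*} (G : SimpleGraph V) (u v w : V) : Prop :=
  G.Adj u w ∧ G.Adj v w ∧
  ∀ x : V, x ∉ ({u, v, w} : Set V) →
    ({y ∈ ({u, v, w} : Set V) | G.Adj x y}.ncard = 1 ∨
     {y ∈ ({u, v, w} : Set V) | G.Adj x y}.ncard = 3)

/-- The triangle property for a graph. -/
def HasTriangleProperty {V : Type*} (G : SimpleGraph V) : Prop :=
  (∃ u v, G.Adj u v) ∧ ∀ u v : V, G.Adj u v → ∃ w, TriangleWitness G u v w

/-- The strong triangle property: each edge has a unique triangle-property witness. -/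
def HasStrongTriangleProperty {V : Type*} (G : SimpleGraph V) : Prop :=
  (∃ u v, G.Adj u v) ∧ ∀ u v : V, G.Adj u v → ∃! w, TriangleWitness G u v w

/-- A coherent 4-subset: all four of its 3-element subsets lie in `C`. -/
def IsCoherent (C : Set (Finset Ω)) (q : Finset Ω) : Prop :=
  q.card = 4 ∧ ∀ t ⊆ q, t.card = 3 → t ∈ C

/-!
Both identities are checked pointwise. Three facts about the design drive every case:
supersimplicity makes the fourth point of a collinear triple unique, so `[a,b]` sends `p` to
the fourth point of the line through `a, b, p`; condition (△) produces the line `{c,d,e,f}`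
from two lines `{a,b,c,d}` and `{a,b,e,f}`; and the two-graph condition says that a 4-set
contains an even number of collinear triples, which decides the collinearity of the last
triple of a 4-set from the other three.

If `x ∈ \overline{y,z}`, with line `{x,y,z,w}`, the situation is symmetric in `x` and `z`, and
`[y,z]` commutes with `[y,x] = [x,y]`. If `x ∉ \overline{y,z}`, conjugation by `[y,z]` fixes `x`
and sends `y` to `z`, and the same three facts show that it carries `[x,y]` to `[x,z]`.
-/

open Finset

theorem Finset.pairwise_ne_of_card_eq_four {α : Type*} [DecidableEq α] {a b c d : α}
    (h : #({a, b, c, d} : Finset α) = 4) : a ≠ b ∧ a ≠ c ∧ a ≠ d ∧ b ≠ c ∧ b ≠ d ∧ c ≠ d := by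
  refine ⟨?_, ?_, ?_, ?_, ?_, ?_⟩ <;> rintro rfl <;>
    simp only [mem_insert, mem_singleton, true_or, or_true, insert_eq_of_mem] at h <;>
    grind [card_le_three]

theorem Finset.exists_eq_erase_of_subset {α : Type*} [DecidableEq α] {s t : Finset α}
    (h : s ⊆ t) (hc : #s + 1 = #t) : ∃ a ∈ t, s = t.erase a := by
  obtain ⟨a, ha, has⟩ := exists_mem_notMem_of_card_lt_card (s := s) (t := t) (by omega)
  exact ⟨a, ha, eq_of_subset_of_card_le (subset_erase.2 ⟨h, has⟩)
    (by rw [card_erase_of_mem ha]; omega)⟩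

open Classical in
theorem ncard_setOf_mem_subset {α : Type*} [DecidableEq α] {C : Set (Finset α)}
    {q : Finset α} (hC : ∀ t ∈ C, #t + 1 = #q) :
    {t ∈ C | t ⊆ q}.ncard = #{a ∈ q | q.erase a ∈ C} := by
  have : {t ∈ C | t ⊆ q} = ↑({a ∈ q | q.erase a ∈ C}.image q.erase) := by
    ext t
    simp only [Set.mem_ofPred_eq, coe_image, coe_filter, Set.mem_image]
    constructor
    · rintro ⟨htC, htq⟩
      obtain ⟨a, ha, rfl⟩ := exists_eq_erase_of_subset htq (hC t htC)
      exact ⟨a, ⟨ha, htC⟩, rfl⟩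
    · rintro ⟨a, ⟨-, haC⟩, rfl⟩
      exact ⟨haC, erase_subset a q⟩
  rw [this, Set.ncard_coe_finset, card_image_of_injOn ((erase_injOn q).mono (filter_subset _ _))]

/-- The two-graph axiom in parity form: `{a,b,c,d}` contains an even number of members of `C`. -/
theorem IsRegularTwoGraph.mem_iff_mem_iff [DecidableEq Ω] {C : Set (Finset Ω)}
    (hC : IsRegularTwoGraph C) {a b c d : Ω} (hab : a ≠ b) (hac : a ≠ c) (had : a ≠ d)
    (hbc : b ≠ c) (hbd : b ≠ d) (hcd : c ≠ d) :
    (({a, b, c} : Finset Ω) ∈ C ↔ ({a, b, d} : Finset Ω) ∈ C) ↔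
      (({a, c, d} : Finset Ω) ∈ C ↔ ({b, c, d} : Finset Ω) ∈ C) := by
  classical
  have h4 : #({a, b, c, d} : Finset Ω) = 4 := card_eq_four.2 ⟨a, b, c, d, by grind⟩
  have := hC.2.2 _ h4
  rw [ncard_setOf_mem_subset (fun t ht => by rw [hC.1 t ht, h4]), card_filter,
    sum_insert (by simp [hab, hac, had]), sum_insert (by simp [hbc, hbd]),
    sum_insert (by simp [hcd]), sum_singleton] at this
  rw [show ({a, b, c, d} : Finset Ω).erase a = {b, c, d} by grind,
    show ({a, b, c, d} : Finset Ω).erase b = {a, c, d} by grind,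
    show ({a, b, c, d} : Finset Ω).erase c = {a, b, d} by grind,
    show ({a, b, c, d} : Finset Ω).erase d = {a, b, c} by grind] at this
  split_ifs at this <;> simp_all

section LineJoin

variable {B : Set (Finset Ω)}

theorem lineJoin_comm (a b : Ω) : lineJoin B a b = lineJoin B b a := by
  ext c
  exact ⟨fun ⟨L, hL, ha, hb, hc⟩ => ⟨L, hL, hb, ha, hc⟩,
    fun ⟨L, hL, hb, ha, hc⟩ => ⟨L, hL, ha, hb, hc⟩⟩

theorem mem_lineJoin_comm {a b c : Ω} : c ∈ lineJoin B a b ↔ b ∈ lineJoin B a c :=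
  ⟨fun ⟨L, hL, ha, hb, hc⟩ => ⟨L, hL, ha, hc, hb⟩, fun ⟨L, hL, ha, hc, hb⟩ => ⟨L, hL, ha, hb, hc⟩⟩

end LineJoin

section Design

variable [DecidableEq Ω] {B : Set (Finset Ω)}

theorem exists_line_of_mem_lineJoin (hB4 : ∀ L ∈ B, #L = 4) {a b c : Ω} (hab : a ≠ b)
    (hca : c ≠ a) (hcb : c ≠ b) (h : c ∈ lineJoin B a b) :
    ∃ d, ({a, b, c, d} : Finset Ω) ∈ B := by
  obtain ⟨L, hL, ha, hb, hc⟩ := h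
  obtain ⟨d, hdL, hd⟩ := exists_mem_notMem_of_card_lt_card (s := {a, b, c}) (t := L)
    (by rw [hB4 L hL]; exact card_le_three.trans_lt (by norm_num))
  have hsub : ({a, b, c, d} : Finset Ω) ⊆ L := by simp [insert_subset_iff, *]
  have hcard : #L ≤ #({a, b, c, d} : Finset Ω) := by
    rw [hB4 L hL, card_eq_four.2 ⟨a, b, c, d, by grind⟩]
  exact ⟨d, eq_of_subset_of_card_le hsub hcard ▸ hL⟩

theorem Supersimple.eq_of_subset_inter (hss : Supersimple B) {L₁ L₂ : Finset Ω} (h₁ : L₁ ∈ B)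
    (h₂ : L₂ ∈ B) {a b c : Ω} (hab : a ≠ b) (hac : a ≠ c) (hbc : b ≠ c)
    (h : {a, b, c} ⊆ L₁ ∩ L₂) : L₁ = L₂ := by
  by_contra hne
  have := (card_le_card h).trans (hss L₁ h₁ L₂ h₂ hne)
  rw [card_eq_three.2 ⟨a, b, c, hab, hac, hbc, rfl⟩] at this
  omega

theorem SymmDiffCond.insert_mem (hB4 : ∀ L ∈ B, #L = 4) (hss : Supersimple B)
    (hsd : SymmDiffCond B) {a b c d e f : Ω} (h₁ : ({a, b, c, d} : Finset Ω) ∈ B)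
    (h₂ : ({a, b, e, f} : Finset Ω) ∈ B) (hce : c ≠ e) (hcf : c ≠ f) :
    ({c, d, e, f} : Finset Ω) ∈ B := by
  obtain ⟨hab, hac, had, hbc, hbd, hcd⟩ := pairwise_ne_of_card_eq_four (hB4 _ h₁)
  obtain ⟨-, hae, haf, hbe, hbf, hef⟩ := pairwise_ne_of_card_eq_four (hB4 _ h₂)
  have hne : ({a, b, c, d} : Finset Ω) ≠ {a, b, e, f} := fun h => by
    have : c ∈ ({a, b, e, f} : Finset Ω) := h ▸ by simp
    simp only [mem_insert, mem_singleton] at this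
    grind
  have hinter : ({a, b, c, d} : Finset Ω) ∩ {a, b, e, f} = {a, b} :=
    (eq_of_subset_of_card_le (by simp [insert_subset_iff])
      (by simpa [card_pair hab] using hss _ h₁ _ h₂ hne)).symm
  convert hsd _ h₁ _ h₂ (by rw [hinter, card_pair hab]) using 1
  ext u
  have := congrArg (u ∈ ·) hinter
  simp only [mem_inter, mem_insert, mem_singleton, eq_iff_iff] at this
  simp only [mem_symmDiff, mem_insert, mem_singleton]
  grind

theorem insert_mem_collinearTriples_iff {a b c : Ω} (hab : a ≠ b) (hac : a ≠ c) (hbc : b ≠ c) :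
    ({a, b, c} : Finset Ω) ∈ collinearTriples B ↔ c ∈ lineJoin B a b :=
  ⟨fun ⟨_, L, hL, h⟩ => ⟨L, hL, h (by simp), h (by simp), h (by simp)⟩,
    fun ⟨L, hL, ha, hb, hc⟩ =>
      ⟨card_eq_three.2 ⟨a, b, c, hab, hac, hbc, rfl⟩, L, hL, by simp [insert_subset_iff, *]⟩⟩

theorem IsRegularTwoGraph.mem_lineJoin_iff_iff (hRT : IsRegularTwoGraph (collinearTriples B))
    {x y z p : Ω} (hxy : x ≠ y) (hxz : x ≠ z) (hyz : y ≠ z) (hpx : p ≠ x) (hpy : p ≠ y)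
    (hpz : p ≠ z) :
    (x ∈ lineJoin B y z ↔ p ∈ lineJoin B y z) ↔
      (p ∈ lineJoin B x y ↔ p ∈ lineJoin B x z) := by
  have := hRT.mem_iff_mem_iff hyz hxy.symm hpy.symm hxz.symm hpz.symm hpx.symm
  rwa [insert_mem_collinearTriples_iff hyz hxy.symm hxz.symm,
    insert_mem_collinearTriples_iff hyz hpy.symm hpz.symm,
    insert_mem_collinearTriples_iff hxy.symm hpy.symm hpx.symm,
    insert_mem_collinearTriples_iff hxz.symm hpz.symm hpx.symm,
    lineJoin_comm y x, lineJoin_comm z x] at this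

theorem mem_lineJoin_of_line_of_mem_lineJoin (hB4 : ∀ L ∈ B, #L = 4) (hss : Supersimple B)
    (hsd : SymmDiffCond B) {a b c p q : Ω} (h : ({b, c, p, q} : Finset Ω) ∈ B)
    (hq : q ∈ lineJoin B b a) (hab : a ≠ b) (hac : a ≠ c) (hap : a ≠ p) :
    p ∈ lineJoin B a c := by
  obtain ⟨-, -, hbq, -, -, -⟩ := pairwise_ne_of_card_eq_four (hB4 _ h)
  by_cases hqa : q = a
  · subst hqa
    exact ⟨_, h, by simp, by simp, by simp⟩
  obtain ⟨r, hr⟩ :=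
    exists_line_of_mem_lineJoin hB4 hbq hab (Ne.symm hqa) (mem_lineJoin_comm.1 hq)
  have := hsd.insert_mem hB4 hss hr (by convert h using 1; grind) hac hap
  exact ⟨_, this, by simp, by simp, by simp⟩

theorem mem_lineJoin_iff_of_line (hB4 : ∀ L ∈ B, #L = 4) (hss : Supersimple B)
    (hsd : SymmDiffCond B) (hRT : IsRegularTwoGraph (collinearTriples B)) {a b c p q : Ω}
    (h : ({b, c, p, q} : Finset Ω) ∈ B) (hq : q ∈ lineJoin B b a) (hab : a ≠ b) (hac : a ≠ c)
    (hap : a ≠ p) : p ∈ lineJoin B b a ↔ a ∈ lineJoin B b c := by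
  obtain ⟨hbc, hbp, -, hcp, -, -⟩ := pairwise_ne_of_card_eq_four (hB4 _ h)
  have hpac := mem_lineJoin_of_line_of_mem_lineJoin hB4 hss hsd h hq hab hac hap
  have hpbc : p ∈ lineJoin B b c := ⟨_, h, by simp, by simp, by simp⟩
  have := hRT.mem_lineJoin_iff_iff hab hac hbc (Ne.symm hap) (Ne.symm hbp) (Ne.symm hcp)
  rw [lineJoin_comm b a]
  tauto

/-- On the line `{x,y,z,w}`, the move `[y,x]` sends the image `q` of `p` under `[y,z]` to the
fourth point `t` of the line through `x, z, p`. -/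
theorem line_through_fourth_points (hB4 : ∀ L ∈ B, #L = 4) (hss : Supersimple B)
    (hsd : SymmDiffCond B) {x y z w p q t : Ω} (hW : ({y, z, x, w} : Finset Ω) ∈ B)
    (hN : ({y, z, p, q} : Finset Ω) ∈ B) (hM : ({x, z, p, t} : Finset Ω) ∈ B) (hpw : p ≠ w) :
    ({y, x, q, t} : Finset Ω) ∈ B := by
  obtain ⟨hyz, hyx, -, -, -, -⟩ := pairwise_ne_of_card_eq_four (hB4 _ hW)
  obtain ⟨-, hyp, hyq, hzp, hzq, hpq⟩ := pairwise_ne_of_card_eq_four (hB4 _ hN)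
  have hqx : q ≠ x := by
    rintro rfl
    have hNW := hss.eq_of_subset_inter hN hW hyz hyq hzq (by simp [insert_subset_iff])
    have : p ∈ ({y, z, q, w} : Finset Ω) := hNW ▸ by simp
    simp only [mem_insert, mem_singleton] at this
    grind
  have := hsd.insert_mem hB4 hss (by convert hM using 1; grind : ({z, p, x, t} : Finset Ω) ∈ B)
    (by convert hN using 1; grind : ({z, p, y, q} : Finset Ω) ∈ B) hyx.symm hqx.symm
  convert this using 1
  grind

namespace IsElemMoveFn

variable {mv : Ω → Ω → Perm Ω}

theorem apply_left (hmv : IsElemMoveFn B mv) {a b : Ω} (hab : a ≠ b) : mv a b a = b :=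
  (hmv.2 a b hab).1

theorem apply_right (hmv : IsElemMoveFn B mv) {a b : Ω} (hab : a ≠ b) : mv a b b = a :=
  (hmv.2 a b hab).2.1

theorem apply_of_mem (hmv : IsElemMoveFn B mv) {a b p q : Ω} (hab : a ≠ b)
    (h : ({a, b, p, q} : Finset Ω) ∈ B) : mv a b p = q :=
  (hmv.2 a b hab).2.2.1 p q h

theorem apply_of_mem' (hmv : IsElemMoveFn B mv) {a b p q : Ω} (hab : a ≠ b)
    (h : ({a, b, p, q} : Finset Ω) ∈ B) : mv a b q = p :=
  hmv.apply_of_mem hab (by rwa [pair_comm])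

theorem apply_of_notMem (hmv : IsElemMoveFn B mv) {a b p : Ω} (hab : a ≠ b) (hpa : p ≠ a)
    (hpb : p ≠ b) (h : p ∉ lineJoin B a b) : mv a b p = p :=
  (hmv.2 a b hab).2.2.2 p hpa hpb fun L hL hm => h ⟨L, hL, hm⟩

theorem comm (hB4 : ∀ L ∈ B, #L = 4) (hmv : IsElemMoveFn B mv) (a b : Ω) : mv a b = mv b a := by
  rcases eq_or_ne a b with rfl | hab
  · rfl
  ext p
  by_cases hpa : p = a
  · rw [hpa, hmv.apply_left hab, hmv.apply_right hab.symm]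
  by_cases hpb : p = b
  · rw [hpb, hmv.apply_right hab, hmv.apply_left hab.symm]
  by_cases hp : p ∈ lineJoin B a b
  · obtain ⟨q, hq⟩ := exists_line_of_mem_lineJoin hB4 hab hpa hpb hp
    rw [hmv.apply_of_mem hab hq, hmv.apply_of_mem hab.symm (by rwa [insert_comm])]
  · rw [hmv.apply_of_notMem hab hpa hpb hp,
      hmv.apply_of_notMem hab.symm hpb hpa (by rwa [lineJoin_comm])]

theorem conj_apply_of_line_of_mem (hB4 : ∀ L ∈ B, #L = 4) (hmv : IsElemMoveFn B mv)
    {x y z w p : Ω} (hW : ({y, z, x, w} : Finset Ω) ∈ B) (hp : p ∈ ({y, z, x, w} : Finset Ω)) :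
    mv y z (mv y x (mv y z p)) = mv y x p := by
  obtain ⟨hyz, hyx, -, -, -, -⟩ := pairwise_ne_of_card_eq_four (hB4 _ hW)
  have hW' : ({y, x, z, w} : Finset Ω) ∈ B := by rwa [insert_comm x z]
  simp only [mem_insert, mem_singleton] at hp
  rcases hp with rfl | rfl | rfl | rfl <;>
    simp only [hmv.apply_left, hmv.apply_right, hmv.apply_of_mem hyz hW,
      hmv.apply_of_mem' hyz hW, hmv.apply_of_mem hyx hW', hmv.apply_of_mem' hyx hW', hyz, hyx,
      ne_eq, not_false_eq_true]

theorem conj_apply_of_line (hB4 : ∀ L ∈ B, #L = 4) (hss : Supersimple B) (hsd : SymmDiffCond B)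
    (hRT : IsRegularTwoGraph (collinearTriples B)) (hmv : IsElemMoveFn B mv) {x y z w : Ω}
    (hW : ({y, z, x, w} : Finset Ω) ∈ B) (p : Ω) :
    mv y z (mv y x (mv y z p)) = mv y x p := by
  by_cases hpW : p ∈ ({y, z, x, w} : Finset Ω)
  · exact conj_apply_of_line_of_mem hB4 hmv hW hpW
  simp only [mem_insert, mem_singleton, not_or] at hpW
  obtain ⟨hpy, hpz, hpx, hpw⟩ := hpW
  obtain ⟨hyz, hyx, -, hzx, -, -⟩ := pairwise_ne_of_card_eq_four (hB4 _ hW)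
  -- the roles of `x` and `z` are interchangeable, and the lemmas are applied both ways round
  have hW' : ({y, x, z, w} : Finset Ω) ∈ B := by rwa [insert_comm x z]
  have hxJ : x ∈ lineJoin B y z := ⟨_, hW, by simp, by simp, by simp⟩
  have hzJ : z ∈ lineJoin B y x := ⟨_, hW, by simp, by simp, by simp⟩
  have hxx : x ∈ lineJoin B y x := ⟨_, hW, by simp, by simp, by simp⟩
  have hzz : z ∈ lineJoin B y z := ⟨_, hW, by simp, by simp, by simp⟩
  by_cases hpz' : p ∈ lineJoin B y z <;> by_cases hpx' : p ∈ lineJoin B y x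
  · obtain ⟨q, hN⟩ := exists_line_of_mem_lineJoin hB4 hyz hpy hpz hpz'
    obtain ⟨r, hR⟩ := exists_line_of_mem_lineJoin hB4 hyx hpy hpx hpx'
    have hpxz : p ∈ lineJoin B x z := by
      have := hRT.mem_lineJoin_iff_iff hyx.symm hzx.symm hyz hpx hpy hpz
      rw [lineJoin_comm x y] at this
      tauto
    obtain ⟨t, hM⟩ := exists_line_of_mem_lineJoin hB4 hzx.symm hpx hpz hpxz
    rw [hmv.apply_of_mem hyz hN,
      hmv.apply_of_mem hyx (line_through_fourth_points hB4 hss hsd hW hN hM hpw),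
      hmv.apply_of_mem' hyz
        (line_through_fourth_points hB4 hss hsd hW' hR (by rwa [insert_comm]) hpw),
      hmv.apply_of_mem hyx hR]
  · obtain ⟨q, hN⟩ := exists_line_of_mem_lineJoin hB4 hyz hpy hpz hpz'
    obtain ⟨-, -, hyq, -, -, -⟩ := pairwise_ne_of_card_eq_four (hB4 _ hN)
    have hq : q ∉ lineJoin B y x := fun hq =>
      hpx' ((mem_lineJoin_iff_of_line hB4 hss hsd hRT hN hq hyx.symm hzx.symm (Ne.symm hpx)).2 hxJ)
    rw [hmv.apply_of_mem hyz hN, hmv.apply_of_notMem hyx hyq.symm (hxx.ne_of_notMem hq).symm hq,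
      hmv.apply_of_mem' hyz hN, hmv.apply_of_notMem hyx hpy hpx hpx']
  · obtain ⟨r, hR⟩ := exists_line_of_mem_lineJoin hB4 hyx hpy hpx hpx'
    obtain ⟨-, -, hyr, -, -, -⟩ := pairwise_ne_of_card_eq_four (hB4 _ hR)
    have hr : r ∉ lineJoin B y z := fun hr =>
      hpz' ((mem_lineJoin_iff_of_line hB4 hss hsd hRT hR hr hyz.symm hzx (Ne.symm hpz)).2 hzJ)
    rw [hmv.apply_of_notMem hyz hpy hpz hpz', hmv.apply_of_mem hyx hR,
      hmv.apply_of_notMem hyz hyr.symm (hzz.ne_of_notMem hr).symm hr]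
  · rw [hmv.apply_of_notMem hyz hpy hpz hpz', hmv.apply_of_notMem hyx hpy hpx hpx',
      hmv.apply_of_notMem hyz hpy hpz hpz']

theorem conj_apply_of_notMem_lineJoin_of_mem (hB4 : ∀ L ∈ B, #L = 4) (hss : Supersimple B)
    (hsd : SymmDiffCond B) (hRT : IsRegularTwoGraph (collinearTriples B))
    (hmv : IsElemMoveFn B mv) {x y z p : Ω} (hxy : x ≠ y) (hyz : y ≠ z) (hxz : x ≠ z)
    (hx : x ∉ lineJoin B y z) (hpx : p ≠ x) (hpy : p ≠ y) (hpz : p ≠ z)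
    (hp : p ∈ lineJoin B y z) : mv y z (mv x y (mv y z p)) = mv x z p := by
  obtain ⟨q, hN⟩ := exists_line_of_mem_lineJoin hB4 hyz hpy hpz hp
  obtain ⟨-, -, hyq, -, hzq, -⟩ := pairwise_ne_of_card_eq_four (hB4 _ hN)
  have hqJ : q ∈ lineJoin B y z := ⟨_, hN, by simp, by simp, by simp⟩
  have hqx : q ≠ x := hqJ.ne_of_notMem hx
  by_cases hq : q ∈ lineJoin B x y
  · obtain ⟨r, hR⟩ := exists_line_of_mem_lineJoin hB4 hxy hqx hyq.symm hq
    obtain ⟨-, -, -, -, hyr, -⟩ := pairwise_ne_of_card_eq_four (hB4 _ hR)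
    have hr : r ∉ lineJoin B y z := fun hr => hx <| mem_lineJoin_comm.1 <|
      (mem_lineJoin_iff_of_line hB4 hss hsd hRT
        (by convert hR using 1; grind : ({y, x, q, r} : Finset Ω) ∈ B) hr hyz.symm hxz.symm
        hzq).1 hqJ
    have hM : ({x, z, p, r} : Finset Ω) ∈ B := by
      convert hsd.insert_mem hB4 hss
        (by convert hR using 1; grind : ({y, q, x, r} : Finset Ω) ∈ B)
        (by convert hN using 1; grind : ({y, q, z, p} : Finset Ω) ∈ B) hxz (Ne.symm hpx)
        using 1
      grind
    have hzz : z ∈ lineJoin B y z := ⟨_, hN, by simp, by simp, by simp⟩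
    rw [hmv.apply_of_mem hyz hN, hmv.apply_of_mem hxy hR,
      hmv.apply_of_notMem hyz hyr.symm (hzz.ne_of_notMem hr).symm hr, hmv.apply_of_mem hxz hM]
  · have hp : p ∉ lineJoin B x z := fun hp => hq <|
      mem_lineJoin_of_line_of_mem_lineJoin hB4 hss hsd
        (by convert hN using 1; grind : ({z, y, q, p} : Finset Ω) ∈ B)
        (by rwa [lineJoin_comm]) hxz hxy hqx.symm
    rw [hmv.apply_of_mem hyz hN, hmv.apply_of_notMem hxy hqx hyq.symm hq,
      hmv.apply_of_mem' hyz hN, hmv.apply_of_notMem hxz hpx hpz hp]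

theorem conj_apply_of_notMem_lineJoin_of_notMem (hB4 : ∀ L ∈ B, #L = 4) (hss : Supersimple B)
    (hsd : SymmDiffCond B) (hRT : IsRegularTwoGraph (collinearTriples B))
    (hmv : IsElemMoveFn B mv) {x y z p : Ω} (hxy : x ≠ y) (hyz : y ≠ z) (hxz : x ≠ z)
    (hx : x ∉ lineJoin B y z) (hpx : p ≠ x) (hpy : p ≠ y) (hpz : p ≠ z)
    (hp : p ∉ lineJoin B y z) : mv y z (mv x y (mv y z p)) = mv x z p := by
  have hpar : p ∈ lineJoin B x y ↔ p ∈ lineJoin B x z :=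
    (hRT.mem_lineJoin_iff_iff hxy hxz hyz hpx hpy hpz).1 (iff_of_false hx hp)
  by_cases hpx' : p ∈ lineJoin B x y
  · obtain ⟨u, hR⟩ := exists_line_of_mem_lineJoin hB4 hxy hpx hpy hpx'
    obtain ⟨v, hM⟩ := exists_line_of_mem_lineJoin hB4 hxz hpx hpz (hpar.1 hpx')
    have hvy : v ≠ y := by
      rintro rfl
      exact hx ⟨_, hM, by simp, by simp, by simp⟩
    have hK : ({y, z, u, v} : Finset Ω) ∈ B := by
      convert hsd.insert_mem hB4 hss
        (by convert hR using 1; grind : ({x, p, y, u} : Finset Ω) ∈ B)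
        (by convert hM using 1; grind : ({x, p, z, v} : Finset Ω) ∈ B) hyz hvy.symm using 1
      grind
    rw [hmv.apply_of_notMem hyz hpy hpz hp, hmv.apply_of_mem hxy hR, hmv.apply_of_mem hyz hK,
      hmv.apply_of_mem hxz hM]
  · rw [hmv.apply_of_notMem hyz hpy hpz hp, hmv.apply_of_notMem hxy hpx hpy hpx',
      hmv.apply_of_notMem hyz hpy hpz hp, hmv.apply_of_notMem hxz hpx hpz (hpar.not.1 hpx')]

theorem conj_apply_of_notMem_lineJoin (hB4 : ∀ L ∈ B, #L = 4) (hss : Supersimple B)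
    (hsd : SymmDiffCond B) (hRT : IsRegularTwoGraph (collinearTriples B))
    (hmv : IsElemMoveFn B mv) {x y z : Ω} (hxy : x ≠ y) (hyz : y ≠ z) (hxz : x ≠ z)
    (hx : x ∉ lineJoin B y z) (p : Ω) : mv y z (mv x y (mv y z p)) = mv x z p := by
  have hzJ : z ∉ lineJoin B x y := by rwa [lineJoin_comm, mem_lineJoin_comm]
  have hyJ : y ∉ lineJoin B x z := by rwa [mem_lineJoin_comm, lineJoin_comm, mem_lineJoin_comm]
  by_cases hpx : p = x
  · rw [hpx, hmv.apply_of_notMem hyz hxy hxz hx, hmv.apply_left hxy, hmv.apply_left hyz,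
      hmv.apply_left hxz]
  by_cases hpy : p = y
  · rw [hpy, hmv.apply_left hyz, hmv.apply_of_notMem hxy hxz.symm hyz.symm hzJ,
      hmv.apply_right hyz, hmv.apply_of_notMem hxz hxy.symm hyz hyJ]
  by_cases hpz : p = z
  · rw [hpz, hmv.apply_right hyz, hmv.apply_right hxy, hmv.apply_of_notMem hyz hxy hxz hx,
      hmv.apply_right hxz]
  by_cases hp : p ∈ lineJoin B y z
  · exact conj_apply_of_notMem_lineJoin_of_mem hB4 hss hsd hRT hmv hxy hyz hxz hx hpx hpy hpz hp
  · exact conj_apply_of_notMem_lineJoin_of_notMem hB4 hss hsd hRT hmv hxy hyz hxz hx hpx hpy hpz hp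

end IsElemMoveFn

end Design

/-- Lemma 4.4: under Hypotheses 4.1, for pairwise distinct `x,y,z`,
`[y,z][x,y][y,z]` equals `[x,y]` if `x ∈ \overline{y,z}`, and `[x,z]` otherwise. -/
theorem elemMove_conj_formula [Fintype Ω] [DecidableEq Ω]
    {B : Set (Finset Ω)} {n lam : ℕ}
    (hD : IsDesign B n lam) (hss : Supersimple B) (hsd : SymmDiffCond B)
    (hRT : IsRegularTwoGraph (collinearTriples B))
    (mv : Ω → Ω → Equiv.Perm Ω) (hmv : IsElemMoveFn B mv)
    (x y z : Ω) (hxy : x ≠ y) (hyz : y ≠ z) (hxz : x ≠ z) :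
    (x ∈ lineJoin B y z → mv y z * mv x y * mv y z = mv x y) ∧
    (x ∉ lineJoin B y z → mv y z * mv x y * mv y z = mv x z) := by
  refine ⟨fun hx => ?_, fun hx =>
    Equiv.ext (hmv.conj_apply_of_notMem_lineJoin hD.2.1 hss hsd hRT hxy hyz hxz hx)⟩
  obtain ⟨w, hW⟩ := exists_line_of_mem_lineJoin hD.2.1 hyz hxy hxz hx
  rw [hmv.comm hD.2.1 x y]
  exact Equiv.ext (hmv.conj_apply_of_line hD.2.1 hss hsd hRT hW)
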